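/- arXiv:2301.09502 — 6 statements merged into one kernel-verified Lean document; each statement's English description precedes it below -/
import Mathlib

section
/- Let G be a group and let 𝒜 = {a_1, …, a_K} be a finite nonempty subset of G. Then the neutral element of G is represented by some full-image word over 𝒜 if and only if the subsemigroup ⟨𝒜⟩ generated by 𝒜 is a group. -/
/-!
If a full-image word `u a v` represents `1`, so does its rotation `a v u`, hence `a⁻¹ = v u`;
since `1 ∈ ⟨𝒜⟩` the possibly empty word `v u` still lies in `⟨𝒜⟩`, so `⟨𝒜⟩` contains the
inverses of its generators and is a group. Conversely, if `⟨𝒜⟩` is a group, pick words `w₀`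
for `1` and `w_a` for `a⁻¹`; then `w₀` followed by all the blocks `a w_a` is a full-image
word for `1`.
-/

/-- A word (nonempty list) `l` over the alphabet `𝒜` is *full-image* if every element
of `𝒜` occurs in `l`.  It represents the product of its letters. -/
def IsFullImageWord {G : Type*} [Group G] (𝒜 : Finset G) (l : List G) : Prop :=
  l ≠ [] ∧ (∀ x ∈ l, x ∈ 𝒜) ∧ (∀ a ∈ 𝒜, a ∈ l)

/-- A subsemigroup `S` of a group is a group if it contains the neutral element and
is closed under inverses. -/
def Subsemigroup.IsSubgroup {G : Type*} [Group G] (S : Subsemigroup G) : Prop :=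
  (1 : G) ∈ S ∧ ∀ x ∈ S, x⁻¹ ∈ S

theorem List.prod_flatMap_eq_one {ι M : Type*} [Monoid M] {L : List ι} {f : ι → List M}
    (h : ∀ i ∈ L, (f i).prod = 1) : (L.flatMap f).prod = 1 := by
  rw [List.flatMap_def, List.prod_flatten, List.map_map]
  exact List.prod_eq_one (by simpa using h)

theorem List.inv_eq_prod_append_of_prod_eq_one {G : Type*} [Group G] {u v : List G} {a : G}
    (h : (u ++ a :: v).prod = 1) : a⁻¹ = (v ++ u).prod := by
  rw [List.prod_append, List.prod_cons] at h
  rw [List.prod_append]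
  exact inv_eq_of_mul_eq_one_right (by rw [← mul_assoc]; exact mul_eq_one_comm.mp h)

namespace Subsemigroup

section Monoid

variable {M : Type*} [Monoid M]

theorem list_prod_mem (S : Subsemigroup M) {l : List M} (hne : l ≠ []) (hl : ∀ x ∈ l, x ∈ S) :
    l.prod ∈ S := by
  induction l with
  | nil => exact absurd rfl hne
  | cons a t ih =>
    rcases eq_or_ne t [] with rfl | ht
    · simpa using hl a (by simp)
    · rw [List.prod_cons]
      exact mul_mem (hl a (by simp)) (ih ht fun x hx => hl x (by simp [hx]))

theorem list_prod_mem_of_one_mem (S : Subsemigroup M) (h1 : (1 : M) ∈ S) {l : List M}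
    (hl : ∀ x ∈ l, x ∈ S) : l.prod ∈ S := by
  rcases eq_or_ne l [] with rfl | hne
  · exact h1
  · exact S.list_prod_mem hne hl

theorem mem_closure_iff_exists_list {s : Set M} {x : M} :
    x ∈ closure s ↔ ∃ l : List M, l ≠ [] ∧ (∀ y ∈ l, y ∈ s) ∧ l.prod = x := by
  refine ⟨fun hx => ?_, ?_⟩
  · induction hx using closure_induction with
    | mem a ha => exact ⟨[a], by simp, by simpa using ha, by simp⟩
    | mul a b _ _ iha ihb =>
      obtain ⟨l₁, hne, hl₁, rfl⟩ := iha
      obtain ⟨l₂, -, hl₂, rfl⟩ := ihb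
      refine ⟨l₁ ++ l₂, by simp [hne], ?_, List.prod_append⟩
      simpa only [List.mem_append, or_imp, forall_and] using ⟨hl₁, hl₂⟩
  · rintro ⟨l, hne, hl, rfl⟩
    exact (closure s).list_prod_mem hne fun y hy => subset_closure (hl y hy)

end Monoid

variable {G : Type*} [Group G] {s : Set G}

theorem isSubgroup_closure_of_inv_mem (h1 : (1 : G) ∈ closure s)
    (hinv : ∀ a ∈ s, a⁻¹ ∈ closure s) : (closure s).IsSubgroup := by
  refine ⟨h1, fun x hx => ?_⟩
  induction hx using closure_induction with
  | mem a ha => exact hinv a ha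
  | mul a b _ _ iha ihb => simpa only [mul_inv_rev] using mul_mem ihb iha

end Subsemigroup

section FullImageWord

open Subsemigroup

variable {G : Type*} [Group G] {𝒜 : Finset G}

theorem IsFullImageWord.isSubgroup_closure {l : List G} (hl : IsFullImageWord 𝒜 l)
    (hprod : l.prod = 1) : (closure (𝒜 : Set G)).IsSubgroup := by
  obtain ⟨hne, hmem, hfull⟩ := hl
  have h1 : (1 : G) ∈ closure (𝒜 : Set G) :=
    mem_closure_iff_exists_list.mpr ⟨l, hne, hmem, hprod⟩
  refine isSubgroup_closure_of_inv_mem h1 fun a ha => ?_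
  obtain ⟨u, v, rfl⟩ := List.append_of_mem (hfull a ha)
  rw [List.inv_eq_prod_append_of_prod_eq_one hprod]
  refine (closure (𝒜 : Set G)).list_prod_mem_of_one_mem h1
    fun x hx => subset_closure (hmem x ?_)
  simp only [List.mem_append, List.mem_cons] at hx ⊢
  tauto

theorem Subsemigroup.IsSubgroup.exists_isFullImageWord_prod_eq_one
    (h : (closure (𝒜 : Set G)).IsSubgroup) : ∃ l, IsFullImageWord 𝒜 l ∧ l.prod = 1 := by
  obtain ⟨w₀, hne, hw₀, hprod₀⟩ := mem_closure_iff_exists_list.mp h.1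
  have hinv (a : G) (ha : a ∈ 𝒜) : ∃ w : List G, (∀ y ∈ w, y ∈ 𝒜) ∧ w.prod = a⁻¹ := by
    obtain ⟨w, -, hw⟩ := mem_closure_iff_exists_list.mp (h.2 a (subset_closure ha))
    exact ⟨w, hw⟩
  choose! w hw hprod using hinv
  refine ⟨w₀ ++ 𝒜.toList.flatMap fun a => a :: w a, ⟨by simp [hne], ?_, ?_⟩, ?_⟩
  · intro x hx
    simp only [List.mem_append, List.mem_flatMap, Finset.mem_toList, List.mem_cons] at hx
    rcases hx with hx | ⟨a, ha, rfl | hx⟩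
    exacts [hw₀ x hx, ha, hw a ha x hx]
  · intro a ha
    simp only [List.mem_append, List.mem_flatMap, Finset.mem_toList]
    exact Or.inr ⟨a, ha, List.mem_cons_self⟩
  · rw [List.prod_append, hprod₀, one_mul]
    refine List.prod_flatMap_eq_one fun a ha => ?_
    rw [List.prod_cons, hprod a (Finset.mem_toList.mp ha), mul_inv_cancel]

end FullImageWord

theorem identity_repr_by_full_image_word_iff_closure_isSubgroup_general
    {G : Type*} [Group G] (𝒜 : Finset G) :
    (∃ l : List G, IsFullImageWord 𝒜 l ∧ l.prod = 1) ↔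
      (Subsemigroup.closure (𝒜 : Set G)).IsSubgroup :=
  ⟨fun ⟨_, hl, hprod⟩ => hl.isSubgroup_closure hprod,
    fun h => h.exists_isFullImageWord_prod_eq_one⟩

/-- For a finite nonempty subset `𝒜` of a group `G`, the neutral
element is represented by a full-image word over `𝒜` if and only if the subsemigroup
generated by `𝒜` is a group. -/
theorem identity_repr_by_full_image_word_iff_closure_isSubgroup
    {G : Type*} [Group G] (𝒜 : Finset G) (h𝒜 : 𝒜.Nonempty) :
    (∃ l : List G, IsFullImageWord 𝒜 l ∧ l.prod = 1) ↔
      (Subsemigroup.closure (𝒜 : Set G)).IsSubgroup :=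
  identity_repr_by_full_image_word_iff_closure_isSubgroup_general 𝒜
end

section
/- Let G be a group and let 𝒜 be a finite nonempty subset of G. If the subsemigroup ⟨𝒜⟩ generated by 𝒜 is a group, then every element of ⟨𝒜⟩ is represented by some full-image word over 𝒜. -/
namespace Subsemigroup

variable {M : Type*} [Monoid M] {s : Set M}

theorem exists_list_ne_nil_of_mem_closure {x : M} (hx : x ∈ closure s) :
    ∃ l : List M, l ≠ [] ∧ (∀ y ∈ l, y ∈ s) ∧ l.prod = x := by
  induction hx using closure_induction with
  | mem x hx => exact ⟨[x], List.cons_ne_nil x [], by simpa using hx, List.prod_singleton⟩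
  | mul x y _ _ ihx ihy =>
    obtain ⟨l₁, hl₁, hl₁s, rfl⟩ := ihx
    obtain ⟨l₂, -, hl₂s, rfl⟩ := ihy
    refine ⟨l₁ ++ l₂, by simp [hl₁], ?_, List.prod_append⟩
    simpa only [List.mem_append, or_imp, forall_and] using ⟨hl₁s, hl₂s⟩

theorem exists_list_mem_prod_eq_one_of_mul_eq_one {a b : M} (ha : a ∈ s)
    (hb : b ∈ closure s) (hab : a * b = 1) :
    ∃ l : List M, (∀ y ∈ l, y ∈ s) ∧ a ∈ l ∧ l.prod = 1 := by
  obtain ⟨w, -, hws, rfl⟩ := exists_list_ne_nil_of_mem_closure hb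
  refine ⟨a :: w, ?_, List.mem_cons_self, by rwa [List.prod_cons]⟩
  simpa only [List.mem_cons, or_imp, forall_and, forall_eq] using ⟨ha, hws⟩

theorem exists_list_prod_eq_one_of_forall_mem (t : Finset M)
    (h : ∀ a ∈ t, ∃ l : List M, (∀ y ∈ l, y ∈ s) ∧ a ∈ l ∧ l.prod = 1) :
    ∃ l : List M, (∀ y ∈ l, y ∈ s) ∧ (∀ a ∈ t, a ∈ l) ∧ l.prod = 1 := by
  classical
  induction t using Finset.induction_on with
  | empty => exact ⟨[], by simp, by simp, List.prod_nil⟩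
  | insert a t _ ih =>
    obtain ⟨w, hws, haw, hw⟩ := h a (Finset.mem_insert_self a t)
    obtain ⟨l, hls, htl, hl⟩ := ih fun b hb ↦ h b (Finset.mem_insert_of_mem hb)
    refine ⟨w ++ l, ?_, ?_, by rw [List.prod_append, hw, hl, one_mul]⟩
    · simpa only [List.mem_append, or_imp, forall_and] using ⟨hws, hls⟩
    · simpa only [Finset.mem_insert, List.mem_append, or_imp, forall_and, forall_eq]
        using ⟨Or.inl haw, fun b hb ↦ Or.inr (htl b hb)⟩

end Subsemigroup

theorem every_element_repr_by_full_image_word_of_closure_isSubgroup_general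
    {G : Type*} [Group G] (𝒜 : Finset G)
    (hgrp : (Subsemigroup.closure (𝒜 : Set G)).IsSubgroup) :
    ∀ g ∈ Subsemigroup.closure (𝒜 : Set G),
      ∃ l : List G, IsFullImageWord 𝒜 l ∧ l.prod = g := by
  intro g hg
  have loops : ∀ a ∈ 𝒜, ∃ l : List G, (∀ y ∈ l, y ∈ (𝒜 : Set G)) ∧ a ∈ l ∧ l.prod = 1 :=
    fun a ha ↦ Subsemigroup.exists_list_mem_prod_eq_one_of_mul_eq_one (Finset.mem_coe.2 ha)
      (hgrp.2 a (Subsemigroup.subset_closure ha)) (mul_inv_cancel a)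
  obtain ⟨W, hW𝒜, h𝒜W, hW⟩ := Subsemigroup.exists_list_prod_eq_one_of_forall_mem 𝒜 loops
  obtain ⟨u, hu, hu𝒜, rfl⟩ := Subsemigroup.exists_list_ne_nil_of_mem_closure hg
  refine ⟨W ++ u, ⟨by simp [hu], ?_, fun a ha ↦ List.mem_append_left u (h𝒜W a ha)⟩, ?_⟩
  · simpa only [List.mem_append, or_imp, forall_and] using ⟨hW𝒜, hu𝒜⟩
  · rw [List.prod_append, hW, one_mul]

/-- If the subsemigroup generated by a finite nonempty subset `𝒜` of a
group is a group, then every element of it is represented by a full-image word over `𝒜`. -/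
theorem every_element_repr_by_full_image_word_of_closure_isSubgroup
    {G : Type*} [Group G] (𝒜 : Finset G) (h𝒜 : 𝒜.Nonempty)
    (hgrp : (Subsemigroup.closure (𝒜 : Set G)).IsSubgroup) :
    ∀ g ∈ Subsemigroup.closure (𝒜 : Set G),
      ∃ l : List G, IsFullImageWord 𝒜 l ∧ l.prod = g :=
  every_element_repr_by_full_image_word_of_closure_isSubgroup_general 𝒜 hgrp
end

section
/- Let 𝒜 be a subset of a group G. Then the subsemigroup ⟨𝒜⟩ generated by 𝒜 contains the neutral element of G if and only if there exists a nonempty subset ℋ ⊆ 𝒜 such that the subsemigroup ⟨ℋ⟩ is a group. -/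
/-- A nonempty list product with elements in `s` lies in `Subsemigroup.closure s`. -/
lemma list_prod_mem_closure' {M : Type*} [Monoid M] {s : Set M} :
    ∀ (l : List M), l ≠ [] → (∀ x ∈ l, x ∈ s) → l.prod ∈ Subsemigroup.closure s := by
  intro l
  induction l with
  | nil => intro h; exact absurd rfl h
  | cons a t ih =>
    intro _ hmem
    rcases eq_or_ne t [] with rfl | ht
    · simpa using Subsemigroup.subset_closure (hmem a (by simp))
    · rw [List.prod_cons]
      exact mul_mem (Subsemigroup.subset_closure (hmem a (by simp)))
        (ih ht fun x hx => hmem x (by simp [hx]))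

/-- Every element of `Subsemigroup.closure s` in a monoid is a product of a nonempty list
of elements of `s`. -/
lemma exists_ne_nil_list_of_mem_closure {M : Type*} [Monoid M] {s : Set M} {x : M}
    (hx : x ∈ Subsemigroup.closure s) :
    ∃ l : List M, l ≠ [] ∧ (∀ y ∈ l, y ∈ s) ∧ l.prod = x := by
  induction hx using Subsemigroup.closure_induction with
  | mem y hy => exact ⟨[y], by simp, by simpa using hy, by simp⟩
  | mul y z _ _ hy hz =>
    obtain ⟨l₁, h₁, hm₁, hp₁⟩ := hy
    obtain ⟨l₂, h₂, hm₂, hp₂⟩ := hz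
    exact ⟨l₁ ++ l₂, by simp [h₁], by
      intro a ha; rcases List.mem_append.mp ha with h | h
      · exact hm₁ a h
      · exact hm₂ a h, by simp [hp₁, hp₂]⟩

/-- For a subset `𝒜` of a group `G`, the subsemigroup generated by `𝒜`
contains the neutral element iff some nonempty subset `ℋ ⊆ 𝒜` generates a subsemigroup
which is a group. -/
theorem one_mem_closure_iff_exists_nonempty_subset_closure_isSubgroup
    {G : Type*} [Group G] (𝒜 : Set G) :
    (1 : G) ∈ Subsemigroup.closure 𝒜 ↔
      ∃ ℋ : Set G, ℋ ⊆ 𝒜 ∧ ℋ.Nonempty ∧ (Subsemigroup.closure ℋ).IsSubgroup := by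
  constructor
  · intro h1
    obtain ⟨l, hne, hmem, hprod⟩ := exists_ne_nil_list_of_mem_closure h1
    refine ⟨{x | x ∈ l}, fun x hx => hmem x hx, ?_, ?_, ?_⟩
    · obtain ⟨a, ha⟩ := List.exists_mem_of_ne_nil l hne
      exact ⟨a, ha⟩
    · have := list_prod_mem_closure' (s := {x | x ∈ l}) l hne (fun x hx => hx)
      rwa [hprod] at this
    · -- closed under inverses
      have hgen : ∀ a ∈ ({x | x ∈ l} : Set G), a⁻¹ ∈ Subsemigroup.closure {x | x ∈ l} := by
        intro a ha
        obtain ⟨l₁, l₂, rfl⟩ := List.append_of_mem ha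
        have hInL : ∀ x ∈ l₂ ++ (l₁ ++ a :: l₂) ++ l₁, x ∈ ({x | x ∈ l₁ ++ a :: l₂} : Set G) := by
          intro x hx
          simp only [List.mem_append, List.mem_cons] at hx ⊢
          tauto
        have hne2 : l₂ ++ (l₁ ++ a :: l₂) ++ l₁ ≠ [] := by simp
        have hmem2 := list_prod_mem_closure' _ hne2 hInL
        have hval : (l₂ ++ (l₁ ++ a :: l₂) ++ l₁).prod = a⁻¹ := by
          have key : l₁.prod * (a * l₂.prod) = 1 := by
            simpa [List.prod_append, List.prod_cons] using hprod
          have h2 : a * l₂.prod = l₁.prod⁻¹ := eq_inv_of_mul_eq_one_right key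
          have ha : a = l₁.prod⁻¹ * l₂.prod⁻¹ := by
            rw [← h2]; group
          simp only [List.prod_append, List.prod_cons]
          rw [ha]
          group
        rw [hval] at hmem2
        exact hmem2
      intro x hx
      induction hx using Subsemigroup.closure_induction with
      | mem y hy => exact hgen y hy
      | mul y z _ _ hy hz => rw [mul_inv_rev]; exact mul_mem hz hy
  · rintro ⟨ℋ, hsub, _, h1, _⟩
    exact Subsemigroup.closure_mono hsub h1
end

section
/- Let G be a subgroup of SL(2,ℤ) which contains a subgroup of finite index isomorphic to ℤ. Then either G contains a torsion element, or G is itself isomorphic to ℤ. -/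
/-!
A finite-index subgroup of `G` isomorphic to `ℤ` contains a normal one, `K`, still of finite
index and infinite cyclic. If `G` is torsion-free, conjugation by any `x` acts on `K` as the
identity or as inversion; in the latter case `x ^ [G : K] ∈ K` would equal its own inverse, so
`x = 1`. Hence `K` is central, the center has finite index, and the transfer `x ↦ x ^ [G : Z(G)]`
embeds `G` into its center, which in turn embeds into `K` by a power map. So `G` is infinite
cyclic.
-/

open Subgroup

theorem MulAut.eq_self_or_eq_inv_of_isCyclic {C : Type*} [Group C] [IsCyclic C]
    (hC : ∀ c : C, IsOfFinOrder c → c = 1) (φ : MulAut C) :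
    (∀ c, φ c = c) ∨ ∀ c, φ c = c⁻¹ := by
  obtain ⟨m, hm⟩ := MonoidHom.map_cyclic φ.toMonoidHom
  obtain ⟨l, hl⟩ := MonoidHom.map_cyclic φ.symm.toMonoidHom
  simp only [MulEquiv.coe_toMonoidHom] at hm hl
  rcases subsingleton_or_nontrivial C with _ | _
  · exact Or.inl fun c => Subsingleton.elim _ _
  obtain ⟨c, hc⟩ := exists_ne (1 : C)
  have hml : m * l = 1 := by
    have h : c ^ (m * l) = c ^ (1 : ℤ) := by
      rw [zpow_one, zpow_mul, ← hm, ← hl, MulEquiv.symm_apply_apply]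
    exact injective_zpow_iff_not_isOfFinOrder.mpr (fun hfin => hc (hC c hfin)) h
  rcases Int.eq_one_or_neg_one_of_mul_eq_one hml with rfl | rfl
  · exact Or.inl fun c => by simpa using hm c
  · exact Or.inr fun c => by simpa using hm c

theorem MonoidHom.injective_of_coe_eq_pow {Γ : Type*} [Group Γ]
    (hΓ : ∀ g : Γ, IsOfFinOrder g → g = 1) {S : Subgroup Γ} (f : Γ →* S) {n : ℕ}
    (hn : n ≠ 0) (hf : ∀ g, (f g : Γ) = g ^ n) : Function.Injective f :=
  (injective_iff_map_eq_one f).mpr fun g hg =>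
    hΓ g (isOfFinOrder_iff_pow_eq_one.mpr ⟨n, Nat.pos_of_ne_zero hn, by rw [← hf, hg]; rfl⟩)

open scoped IsMulCommutative in
theorem isCyclic_of_isMulCommutative_of_finiteIndex {A : Type*} [Group A] [IsMulCommutative A]
    (hA : ∀ a : A, IsOfFinOrder a → a = 1) (K : Subgroup A) [K.FiniteIndex] [IsCyclic K] :
    IsCyclic A :=
  isCyclic_of_injective _ <| MonoidHom.injective_of_coe_eq_pow hA
    ((powMonoidHom K.index).codRestrict K K.pow_index_mem) FiniteIndex.index_ne_zero fun _ => rfl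

section TorsionFree

-- Torsion-freeness in the sense of no nontrivial element of finite order: Mathlib's
-- `IsMulTorsionFree` also demands unique roots, which for a nonabelian `Γ` is stronger.
variable {Γ : Type*} [Group Γ] (hΓ : ∀ g : Γ, IsOfFinOrder g → g = 1)
include hΓ

theorem Subgroup.le_center_of_isCyclic (K : Subgroup Γ) [K.Normal] [K.FiniteIndex] [IsCyclic K] :
    K ≤ center Γ := by
  intro k hk
  rw [mem_center_iff]
  intro x
  have hK : ∀ c : K, IsOfFinOrder c → c = 1 := fun c hc =>
    Subtype.ext (hΓ c (K.subtype.isOfFinOrder hc))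
  rcases MulAut.eq_self_or_eq_inv_of_isCyclic hK (MulAut.conjNormal (H := K) x) with hx | hx
  · have hconj := congrArg Subtype.val (hx ⟨k, hk⟩)
    simp only [MulAut.conjNormal_apply] at hconj
    exact mul_inv_eq_iff_eq_mul.mp hconj
  · have hpow := congrArg Subtype.val (hx ⟨_, K.pow_index_mem x⟩)
    simp only [MulAut.conjNormal_apply, (Commute.self_pow x _).eq, mul_inv_cancel_right,
      coe_inv] at hpow
    have hx1 : x = 1 := hΓ x <| isOfFinOrder_iff_pow_eq_one.mpr
      ⟨K.index + K.index, by have := FiniteIndex.index_ne_zero (H := K); omega,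
        by rw [pow_add, ← eq_inv_iff_mul_eq_one.mp hpow]⟩
    simp [hx1]

theorem isCyclic_of_finiteIndex (H : Subgroup Γ) [H.FiniteIndex] [IsCyclic H] :
    IsCyclic Γ := by
  have : IsCyclic H.normalCore := isCyclic_of_le (normalCore_le H)
  have hK : H.normalCore ≤ center Γ := H.normalCore.le_center_of_isCyclic hΓ
  have : (center Γ).FiniteIndex := finiteIndex_of_le hK
  have : IsCyclic (H.normalCore.subgroupOf (center Γ)) :=
    isCyclic_of_injective (subgroupOfEquivOfLe hK).toMonoidHom (subgroupOfEquivOfLe hK).injective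
  have hZ : ∀ c : center Γ, IsOfFinOrder c → c = 1 := fun c hc =>
    Subtype.ext (hΓ c ((center Γ).subtype.isOfFinOrder hc))
  have : IsCyclic (center Γ) :=
    isCyclic_of_isMulCommutative_of_finiteIndex hZ (H.normalCore.subgroupOf (center Γ))
  exact isCyclic_of_injective _ <| MonoidHom.injective_of_coe_eq_pow hΓ
    (MonoidHom.transferCenterPow Γ) FiniteIndex.index_ne_zero MonoidHom.transferCenterPow_apply

theorem nonempty_mulEquiv_multiplicative_int_of_finiteIndex (H : Subgroup Γ) [H.FiniteIndex]
    (e : H ≃* Multiplicative ℤ) : Nonempty (Γ ≃* Multiplicative ℤ) := by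
  have : IsCyclic H := e.isCyclic.mpr inferInstance
  have : Infinite Γ := Infinite.of_injective (Subtype.val ∘ e.symm)
    (Subtype.val_injective.comp e.symm.injective)
  have := isCyclic_of_finiteIndex hΓ H
  exact ⟨intCyclicMulEquiv.symm⟩

end TorsionFree

abbrev SL2Z := Matrix.SpecialLinearGroup (Fin 2) ℤ

/-- Let `G ≤ SL(2,ℤ)` contain a finite-index subgroup isomorphic to
`ℤ`.  Then either `G` contains a torsion element, or `G` itself is isomorphic to `ℤ`. -/
theorem subgroup_sl2z_torsion_or_Z_of_finite_index_Z
    (G : Subgroup SL2Z)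
    (h : ∃ H : Subgroup G, H.FiniteIndex ∧ Nonempty (H ≃* Multiplicative ℤ)) :
    (∃ T ∈ G, T ≠ 1 ∧ ∃ m : ℕ, 1 ≤ m ∧ T ^ m = 1) ∨
      Nonempty (G ≃* Multiplicative ℤ) := by
  obtain ⟨H, hH, ⟨e⟩⟩ := h
  refine or_iff_not_imp_left.mpr fun hno_torsion => ?_
  have htf : ∀ t : G, IsOfFinOrder t → t = 1 := fun t ht => by
    obtain ⟨m, hm, htm⟩ := ht.exists_pow_eq_one
    by_contra ht1
    exact hno_torsion ⟨t, t.2, fun h1 => ht1 (Subtype.ext h1), m, hm,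
      by simpa using congrArg Subtype.val htm⟩
  exact nonempty_mulEquiv_multiplicative_int_of_finiteIndex htf H e
end

section
/- Let 𝒢 = {(A_1, a_1), …, (A_K, a_K)} be a finite set of elements of SA(2,ℤ). If the subsemigroup ⟨A_1, …, A_K⟩ of SL(2,ℤ) is a group containing a torsion element, then the subsemigroup ⟨𝒢⟩ of SA(2,ℤ) is a group. -/
open scoped Matrix

/-- The special affine group `SA(2, ℤ) = ℤ² ⋊ SL(2, ℤ)`, as pairs `(A, a)`. -/
@[ext]
structure SA2 : Type where
  lin : SL2Z
  trans : Fin 2 → ℤ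

namespace SA2

instance : Mul SA2 :=
  ⟨fun p q => ⟨p.lin * q.lin, (p.lin : Matrix (Fin 2) (Fin 2) ℤ) *ᵥ q.trans + p.trans⟩⟩

instance : One SA2 := ⟨⟨1, 0⟩⟩

instance : Inv SA2 :=
  ⟨fun p => ⟨p.lin⁻¹, -(((p.lin⁻¹ : SL2Z) : Matrix (Fin 2) (Fin 2) ℤ) *ᵥ p.trans)⟩⟩

@[simp] lemma mul_lin (p q : SA2) : (p * q).lin = p.lin * q.lin := rfl
@[simp] lemma mul_trans (p q : SA2) :
    (p * q).trans = (p.lin : Matrix (Fin 2) (Fin 2) ℤ) *ᵥ q.trans + p.trans := rfl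
@[simp] lemma one_lin : (1 : SA2).lin = 1 := rfl
@[simp] lemma one_trans : (1 : SA2).trans = 0 := rfl
@[simp] lemma inv_lin (p : SA2) : (p⁻¹).lin = p.lin⁻¹ := rfl
@[simp] lemma inv_trans (p : SA2) :
    (p⁻¹).trans = -(((p.lin⁻¹ : SL2Z) : Matrix (Fin 2) (Fin 2) ℤ) *ᵥ p.trans) := rfl

instance : Group SA2 where
  mul_assoc a b c := by
    ext i
    · rw [mul_lin, mul_lin, mul_lin, mul_lin, mul_assoc]
    · simp only [mul_trans, mul_lin, Matrix.SpecialLinearGroup.coe_mul, Matrix.mulVec_add,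
        Matrix.mulVec_mulVec, add_assoc]
  one_mul a := by
    ext i
    · simp
    · simp
  mul_one a := by
    ext i
    · simp
    · simp [Matrix.mulVec_zero]
  inv_mul_cancel a := by
    ext i
    · simp
    · simp only [mul_trans, inv_lin, inv_trans, one_trans, add_neg_cancel]

end SA2

/-! If `T ∈ SL(2,ℤ)` is nontrivial with `T ^ m = 1`, then `1 + T + ⋯ + T ^ (m - 1) = 0`: either
`T - 1` has nonzero determinant, or `T` is unipotent, and a unipotent matrix of finite order is `1`.
Hence every affine map `(T, t)` satisfies `(T, t) ^ m = 1`. Lifting `T` to `g ∈ ⟨𝒢⟩` gives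
`1 = g ^ m ∈ ⟨𝒢⟩`. For `p ∈ ⟨𝒢⟩`, lift the inverse of its linear part to `q ∈ ⟨𝒢⟩`; then `q p g`
has linear part `T`, so its inverse is one of its powers, and `p⁻¹ = g (q p g)⁻¹ q ∈ ⟨𝒢⟩`. -/

open Finset

namespace Subsemigroup

section Monoid

variable {M : Type*} [Monoid M] {S : Subsemigroup M} {x : M}

theorem pow_succ_mem (hx : x ∈ S) : ∀ n : ℕ, x ^ (n + 1) ∈ S
  | 0 => by rwa [pow_one]
  | n + 1 => by rw [pow_succ]; exact mul_mem (pow_succ_mem hx n) hx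

theorem pow_mem_of_one_mem (h1 : (1 : M) ∈ S) (hx : x ∈ S) : ∀ n : ℕ, x ^ n ∈ S
  | 0 => by rwa [pow_zero]
  | n + 1 => pow_succ_mem hx n

theorem one_mem_of_isOfFinOrder (hx : x ∈ S) (hfin : IsOfFinOrder x) : (1 : M) ∈ S := by
  rw [← pow_orderOf_eq_one x, ← Nat.sub_add_cancel hfin.orderOf_pos]
  exact pow_succ_mem hx _

end Monoid

section Group

variable {G : Type*} [Group G]

theorem inv_mem_of_isOfFinOrder {S : Subsemigroup G} {x : G} (hx : x ∈ S)
    (hfin : IsOfFinOrder x) : x⁻¹ ∈ S := by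
  obtain ⟨n, hn⟩ : x⁻¹ ∈ Submonoid.powers x :=
    hfin.mem_powers_iff_mem_zpowers.2 (inv_mem (Subgroup.mem_zpowers x))
  rw [← hn]
  exact pow_mem_of_one_mem (one_mem_of_isOfFinOrder hx hfin) hx n

theorem isSubgroup_of_map {H : Type*} [Group H] (φ : G →ₙ* H) (S : Subsemigroup G)
    (hinv : ∀ y ∈ S.map φ, y⁻¹ ∈ S.map φ)
    (htor : ∃ t ∈ S.map φ, ∀ g, φ g = t → IsOfFinOrder g) : S.IsSubgroup := by
  obtain ⟨t, ⟨g, hgS, rfl⟩, hfiber⟩ := htor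
  have hg : IsOfFinOrder g := hfiber g rfl
  refine ⟨one_mem_of_isOfFinOrder hgS hg, fun p hp => ?_⟩
  obtain ⟨q, hqS, hq⟩ := hinv (φ p) ⟨p, hp, rfl⟩
  have hx : (q * p * g)⁻¹ ∈ S := by
    refine inv_mem_of_isOfFinOrder (mul_mem (mul_mem hqS hp) hgS) (hfiber _ ?_)
    rw [map_mul, map_mul, hq, inv_mul_cancel, one_mul]
  have hp_inv : p⁻¹ = g * (q * p * g)⁻¹ * q := by group
  rw [hp_inv]
  exact mul_mem (mul_mem hgS hx) hqS

end Group

end Subsemigroup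

theorem one_add_pow_of_sq_eq_zero {R : Type*} [Semiring R] {N : R} (hN : N ^ 2 = 0) :
    ∀ k : ℕ, (1 + N) ^ k = 1 + k • N
  | 0 => by simp
  | k + 1 => by
    rw [pow_succ, one_add_pow_of_sq_eq_zero hN k, mul_add, mul_one, add_mul, smul_mul_assoc,
      ← sq, hN, smul_zero, add_zero, one_mul, succ_nsmul, add_assoc]

namespace Matrix

variable {R : Type*} [CommRing R] {U : Matrix (Fin 2) (Fin 2) R}

-- Cayley–Hamilton, rewritten using `det (U - 1) = 2 - trace U`
theorem sub_one_sq_of_det_eq_one (hdet : U.det = 1) : (U - 1) ^ 2 = -(U - 1).det • U := by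
  rw [det_fin_two] at hdet ⊢
  ext i j
  fin_cases i <;> fin_cases j <;> simp [sq, mul_apply, one_apply]
  · linear_combination (U 0 0 - 1) * hdet
  · linear_combination U 0 1 * hdet
  · linear_combination U 1 0 * hdet
  · linear_combination (U 1 1 - 1) * hdet

theorem geom_sum_eq_zero_of_pow_eq_one [IsDomain R] [CharZero R] (hdet : U.det = 1) (hU : U ≠ 1)
    {m : ℕ} (hm : U ^ m = 1) : ∑ j ∈ range m, U ^ j = 0 := by
  by_cases hd : (U - 1).det = 0
  · -- then `U` is unipotent, and a unipotent matrix of finite order `m > 0` is the identity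
    have hN : (U - 1) ^ 2 = 0 := by rw [sub_one_sq_of_det_eq_one hdet, hd, neg_zero, zero_smul]
    have hmN : (m : R) • (U - 1) = 0 := by
      have h := one_add_pow_of_sq_eq_zero hN m
      rw [add_sub_cancel, hm, left_eq_add] at h
      rwa [Nat.cast_smul_eq_nsmul]
    obtain hm0 | hU1 := smul_eq_zero.1 hmN
    · rw [Nat.cast_eq_zero.1 hm0, range_zero, sum_empty]
    · exact absurd (sub_eq_zero.1 hU1) hU
  · have h : (U - 1).det • ∑ j ∈ range m, U ^ j = 0 := calc
      _ = (∑ j ∈ range m, U ^ j) * ((U - 1) * (U - 1).adjugate) := by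
        rw [mul_adjugate, mul_smul_comm, mul_one]
      _ = 0 := by rw [← mul_assoc, geom_sum_mul, hm, sub_self, zero_mul]
    exact (smul_eq_zero.1 h).resolve_left hd

end Matrix

namespace SA2

def linHom : SA2 →* SL2Z where
  toFun := lin
  map_one' := rfl
  map_mul' _ _ := rfl

theorem pow_trans (p : SA2) (n : ℕ) :
    (p ^ n).trans = (∑ j ∈ range n, (p.lin : Matrix (Fin 2) (Fin 2) ℤ) ^ j) *ᵥ p.trans := by
  induction n with
  | zero => simp
  | succ n ih =>
    rw [pow_succ', mul_trans, ih, geom_sum_succ, Matrix.add_mulVec, Matrix.one_mulVec,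
      Matrix.mulVec_mulVec]

theorem isOfFinOrder_of_isOfFinOrder_lin {p : SA2} (h1 : p.lin ≠ 1) (hfin : IsOfFinOrder p.lin) :
    IsOfFinOrder p := by
  obtain ⟨m, hm, hpm⟩ := isOfFinOrder_iff_pow_eq_one.1 hfin
  have hsum := Matrix.geom_sum_eq_zero_of_pow_eq_one p.lin.prop
    (fun h => h1 (Subtype.ext h)) (by rw [← Matrix.SpecialLinearGroup.coe_pow, hpm]; rfl)
  refine isOfFinOrder_iff_pow_eq_one.2 ⟨m, hm, SA2.ext ?_ ?_⟩
  · exact (map_pow linHom p m).trans hpm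
  · rw [pow_trans, hsum, Matrix.zero_mulVec, one_trans]

end SA2

theorem sa2_closure_isGroup_of_torsion_general
    (K : ℕ) (A : Fin K → SL2Z) (a : Fin K → Fin 2 → ℤ)
    (hgrp : (Subsemigroup.closure (Set.range A)).IsSubgroup)
    (htor : ∃ T ∈ Subsemigroup.closure (Set.range A),
        T ≠ 1 ∧ ∃ m : ℕ, 1 ≤ m ∧ T ^ m = 1) :
    (Subsemigroup.closure (Set.range fun i => SA2.mk (A i) (a i))).IsSubgroup := by
  have hmap : (Subsemigroup.closure (Set.range fun i => SA2.mk (A i) (a i))).map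
      (SA2.linHom : SA2 →ₙ* SL2Z) = Subsemigroup.closure (Set.range A) := by
    rw [MulHom.map_mclosure, ← Set.range_comp]
    rfl
  obtain ⟨T, hT, hT1, m, hm, hTm⟩ := htor
  refine Subsemigroup.isSubgroup_of_map _ _ (hmap ▸ hgrp.2) ⟨T, hmap ▸ hT, fun p hp => ?_⟩
  obtain rfl : p.lin = T := hp
  exact SA2.isOfFinOrder_of_isOfFinOrder_lin hT1 (isOfFinOrder_iff_pow_eq_one.2 ⟨m, hm, hTm⟩)

/-- If the subsemigroup `⟨A_1, …, A_K⟩` of `SL(2,ℤ)` is a group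
containing a torsion element, then the subsemigroup of `SA(2,ℤ)` generated by
`𝒢 = {(A_1,a_1), …, (A_K,a_K)}` is a group. -/
theorem sa2_closure_isGroup_of_torsion
    (K : ℕ) (hK : 0 < K) (A : Fin K → SL2Z) (a : Fin K → Fin 2 → ℤ)
    (hgrp : (Subsemigroup.closure (Set.range A)).IsSubgroup)
    (htor : ∃ T ∈ Subsemigroup.closure (Set.range A),
        T ≠ 1 ∧ ∃ m : ℕ, 1 ≤ m ∧ T ^ m = 1) :
    (Subsemigroup.closure (Set.range fun i => SA2.mk (A i) (a i))).IsSubgroup :=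
  sa2_closure_isGroup_of_torsion_general K A a hgrp htor
end

section
/- With the diagonal-alphabet setup below and λ > 1: let (i, j) ∈ J₊ × J₋, let k ∈ J₀, and let (x, y)ᵀ ∈ Cell(e_k), where e_k := (a_k, b_k)ᵀ. Then there exist elements (I, v) and (I, w) of the subsemigroup ⟨𝒢'⟩ of Aff(2,ℝ) such that (x, y)ᵀ = r₁·v + r₂·w for some real numbers r₁, r₂ > 0, and moreover (I, v) and (I, w) are each represented by a word over the alphabet 𝒢' in which the letter (A'_k, a'_k) occurs. -/
open scoped Matrix

/-- Pairs `(M, u)` with multiplication `(M,u)·(N,v) = (MN, Mv + u)`; the affine group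
`Aff(2,ℝ)` consists of such pairs with `M` invertible, and the subsemigroups considered
below only involve invertible linear parts. -/
@[ext]
structure Aff2 : Type where
  lin : Matrix (Fin 2) (Fin 2) ℝ
  trans : Fin 2 → ℝ

namespace Aff2

instance : Mul Aff2 := ⟨fun p q => ⟨p.lin * q.lin, p.lin *ᵥ q.trans + p.trans⟩⟩

instance : One Aff2 := ⟨⟨1, 0⟩⟩

@[simp] lemma mul_lin (p q : Aff2) : (p * q).lin = p.lin * q.lin := rfl
@[simp] lemma mul_trans (p q : Aff2) : (p * q).trans = p.lin *ᵥ q.trans + p.trans := rfl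
@[simp] lemma one_lin : (1 : Aff2).lin = 1 := rfl
@[simp] lemma one_trans : (1 : Aff2).trans = 0 := rfl

instance : Monoid Aff2 where
  mul_assoc a b c := by
    ext i
    · rw [mul_lin, mul_lin, mul_lin, mul_lin, mul_assoc]
    · simp only [mul_trans, mul_lin, Matrix.mulVec_add, Matrix.mulVec_mulVec, add_assoc]
  one_mul a := by
    ext i
    · simp
    · simp
  mul_one a := by
    ext i
    · simp
    · simp [Matrix.mulVec_zero]

end Aff2

/-- The diagonal alphabet `𝒢'`: `(A'_t, a'_t)` with `A'_t = diag(λ^{z_t}, λ^{-z_t})`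
and `a'_t = (a_t, b_t)ᵀ`. -/
noncomputable def diagAlphabet {K : ℕ} (lam : ℝ) (z : Fin K → ℤ) (a b : Fin K → ℝ) :
    Fin K → Aff2 :=
  fun t => ⟨Matrix.diagonal ![lam ^ (z t), lam ^ (-z t)], ![a t, b t]⟩

/-- `Cell(d) = {(r₁ d₁, r₂ d₂)ᵀ : r₁, r₂ > 0}`. -/
def cell (d : Fin 2 → ℝ) : Set (Fin 2 → ℝ) :=
  {v | ∃ r₁ r₂ : ℝ, 0 < r₁ ∧ 0 < r₂ ∧ v = ![r₁ * d 0, r₂ * d 1]}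

/-! The letter `k` acts as the pure translation by `e_k`, while suitable powers `U` of the letter
`j` and `V` of the letter `i` have linear parts `diag(u⁻¹, u)` and `diag(u, u⁻¹)` with `u` as large
as we like. The words `U kˢ V` and `V kˢ U` then have linear part `I` and translation parts
`s • diag(u⁻¹, u) e_k + c` and `s • diag(u, u⁻¹) e_k + c'`. For `u` large, `(r₁ a_k, r₂ b_k)` is a
positive combination of `diag(u⁻¹, u) e_k` and `diag(u, u⁻¹) e_k`; by Cramer's rule this is an
open condition on the pair of vectors, so it survives the constants `c, c'` once `s` is large.
If `e_k` has a zero coordinate, the target is a positive multiple of `e_k` itself. -/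

open Filter Topology Matrix

namespace Aff2

def linHom : Aff2 →* Matrix (Fin 2) (Fin 2) ℝ where
  toFun := lin
  map_one' := rfl
  map_mul' _ _ := rfl

lemma pow_lin (g : Aff2) (n : ℕ) : (g ^ n).lin = g.lin ^ n := map_pow linHom g n

lemma pow_trans_of_lin_eq_one {g : Aff2} (hg : g.lin = 1) (n : ℕ) :
    (g ^ n).trans = (n : ℝ) • g.trans := by
  induction n with
  | zero => simp
  | succ n ih =>
    rw [pow_succ, mul_trans, ih, pow_lin, hg, one_pow, one_mulVec]
    push_cast
    module

lemma mul_pow_mul_lin_of_lin_eq_one {g : Aff2} (hg : g.lin = 1) (U V : Aff2) (s : ℕ) :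
    (U * g ^ s * V).lin = U.lin * V.lin := by
  simp [pow_lin, hg]

lemma mul_pow_mul_trans_of_lin_eq_one {g : Aff2} (hg : g.lin = 1) (U V : Aff2) (s : ℕ) :
    (U * g ^ s * V).trans = (s : ℝ) • (U.lin *ᵥ g.trans) + (U * V).trans := by
  simp only [mul_trans, mul_lin, pow_lin, hg, one_pow, mul_one, pow_trans_of_lin_eq_one hg,
    mulVec_smul]
  abel

end Aff2

def cross (v w : Fin 2 → ℝ) : ℝ := v 0 * w 1 - v 1 * w 0

@[fun_prop]
lemma Continuous.cross {α : Type*} [TopologicalSpace α] {f g : α → Fin 2 → ℝ}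
    (hf : Continuous f) (hg : Continuous g) : Continuous fun a => _root_.cross (f a) (g a) := by
  unfold _root_.cross
  fun_prop

def IsPosCombination {M : Type*} [AddCommMonoid M] [Module ℝ M] (x v w : M) : Prop :=
  ∃ c₁ c₂ : ℝ, 0 < c₁ ∧ 0 < c₂ ∧ x = c₁ • v + c₂ • w

lemma IsPosCombination.smul {M : Type*} [AddCommMonoid M] [Module ℝ M] {x v w : M}
    (h : IsPosCombination x v w) {t : ℝ} (ht : 0 < t) : IsPosCombination x (t • v) (t • w) := by
  obtain ⟨c₁, c₂, hc₁, hc₂, rfl⟩ := h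
  refine ⟨c₁ / t, c₂ / t, div_pos hc₁ ht, div_pos hc₂ ht, ?_⟩
  rw [smul_smul, smul_smul, div_mul_cancel₀ _ ht.ne', div_mul_cancel₀ _ ht.ne']

lemma isPosCombination_iff_cross {x v w : Fin 2 → ℝ} (h : cross v w ≠ 0) :
    IsPosCombination x v w ↔ 0 < cross x w / cross v w ∧ 0 < cross v x / cross v w := by
  constructor
  · rintro ⟨c₁, c₂, hc₁, hc₂, rfl⟩
    have h₁ : cross (c₁ • v + c₂ • w) w = c₁ * cross v w := by simp [cross]; ring
    have h₂ : cross v (c₁ • v + c₂ • w) = c₂ * cross v w := by simp [cross]; ring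
    rw [h₁, h₂, mul_div_cancel_right₀ _ h, mul_div_cancel_right₀ _ h]
    exact ⟨hc₁, hc₂⟩
  · rintro ⟨hc₁, hc₂⟩
    refine ⟨_, _, hc₁, hc₂, ?_⟩
    ext i
    fin_cases i <;> simp <;> field_simp <;> unfold cross <;> ring

lemma eventually_isPosCombination_add_smul {x p q : Fin 2 → ℝ} (hpq : cross p q ≠ 0)
    (hx : IsPosCombination x p q) (c d : Fin 2 → ℝ) :
    ∀ᶠ ε in 𝓝 (0 : ℝ), IsPosCombination x (p + ε • c) (q + ε • d) := by
  set D := fun ε : ℝ => cross (p + ε • c) (q + ε • d)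
  have hD : Continuous D := by fun_prop
  have hD0 : D 0 ≠ 0 := by simpa [D] using hpq
  rw [isPosCombination_iff_cross hpq] at hx
  have h₁ : ContinuousAt (fun ε => cross x (q + ε • d) / D ε) 0 :=
    (Continuous.continuousAt (by fun_prop)).div hD.continuousAt hD0
  have h₂ : ContinuousAt (fun ε => cross (p + ε • c) x / D ε) 0 :=
    (Continuous.continuousAt (by fun_prop)).div hD.continuousAt hD0
  filter_upwards [hD.continuousAt.eventually_ne hD0,
    h₁.eventually (lt_mem_nhds (by simpa [D] using hx.1)),
    h₂.eventually (lt_mem_nhds (by simpa [D] using hx.2))] with ε hDε hε₁ hε₂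
  exact (isPosCombination_iff_cross hDε).2 ⟨hε₁, hε₂⟩

lemma eventually_isPosCombination_smul_add {x p q : Fin 2 → ℝ} (hpq : cross p q ≠ 0)
    (hx : IsPosCombination x p q) (c d : Fin 2 → ℝ) :
    ∀ᶠ s : ℕ in atTop, IsPosCombination x ((s : ℝ) • p + c) ((s : ℝ) • q + d) := by
  filter_upwards [(tendsto_inv_atTop_zero.comp tendsto_natCast_atTop_atTop).eventually
    (eventually_isPosCombination_add_smul hpq hx c d), eventually_gt_atTop 0] with s hs hs0
  have hs0' : (0 : ℝ) < s := Nat.cast_pos.2 hs0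
  convert hs.smul hs0' using 1 <;>
    simp only [Function.comp_apply, smul_add, smul_smul, mul_inv_cancel₀ hs0'.ne', one_smul]

lemma isPosCombination_self_of_eq_zero_or_eq_zero {e : Fin 2 → ℝ} (he : e 0 = 0 ∨ e 1 = 0)
    {r₁ r₂ : ℝ} (hr₁ : 0 < r₁) (hr₂ : 0 < r₂) : IsPosCombination ![r₁ * e 0, r₂ * e 1] e e := by
  rcases he with he | he
  · refine ⟨r₂ / 2, r₂ / 2, by positivity, by positivity, ?_⟩
    ext i; fin_cases i <;> simp [he]; ring
  · refine ⟨r₁ / 2, r₁ / 2, by positivity, by positivity, ?_⟩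
    ext i; fin_cases i <;> simp [he]; ring

lemma eventually_isPosCombination_diagonal_mulVec {r₁ r₂ : ℝ} (hr₁ : 0 < r₁) (hr₂ : 0 < r₂)
    (e : Fin 2 → ℝ) : ∀ᶠ u in atTop, IsPosCombination ![r₁ * e 0, r₂ * e 1]
      (diagonal ![u⁻¹, u] *ᵥ e) (diagonal ![u, u⁻¹] *ᵥ e) := by
  filter_upwards [eventually_gt_atTop 1, eventually_gt_atTop (r₁ / r₂),
    eventually_gt_atTop (r₂ / r₁)] with u hu h₁ h₂
  rw [div_lt_iff₀ hr₂] at h₁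
  rw [div_lt_iff₀ hr₁] at h₂
  have hu4 : 1 < u ^ 4 := one_lt_pow₀ hu (by norm_num)
  -- Cramer's rule for the system `c₁ u⁻¹ + c₂ u = r₁`, `c₁ u + c₂ u⁻¹ = r₂`
  refine ⟨u * (r₂ * u ^ 2 - r₁) / (u ^ 4 - 1), u * (r₁ * u ^ 2 - r₂) / (u ^ 4 - 1),
    ?_, ?_, ?_⟩
  · exact div_pos (mul_pos (by linarith) (by nlinarith)) (by linarith)
  · exact div_pos (mul_pos (by linarith) (by nlinarith)) (by linarith)
  · have hu0 : u ≠ 0 := by positivity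
    have hu4' : u ^ 4 - 1 ≠ 0 := by linarith
    ext i; fin_cases i <;> simp <;> field_simp <;> ring

lemma cross_diagonal_mulVec_ne_zero {u : ℝ} (hu : 1 < u) {e : Fin 2 → ℝ} (he₀ : e 0 ≠ 0)
    (he₁ : e 1 ≠ 0) : cross (diagonal ![u⁻¹, u] *ᵥ e) (diagonal ![u, u⁻¹] *ᵥ e) ≠ 0 := by
  have hlt : u⁻¹ * u⁻¹ < u * u := by
    have := inv_lt_one_of_one_lt₀ hu
    nlinarith [inv_pos.2 (zero_lt_one.trans hu)]
  have : cross (diagonal ![u⁻¹, u] *ᵥ e) (diagonal ![u, u⁻¹] *ᵥ e) =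
      e 0 * e 1 * (u⁻¹ * u⁻¹ - u * u) := by
    simp [cross]; ring
  rw [this]
  exact mul_ne_zero (mul_ne_zero he₀ he₁) (by linarith)

lemma diagonal_mul_diagonal_inv {a b : ℝ} (ha : a ≠ 0) (hb : b ≠ 0) :
    diagonal ![a, b] * diagonal ![a⁻¹, b⁻¹] = 1 := by
  rw [diagonal_mul_diagonal, ← diagonal_one]
  congr 1
  ext i; fin_cases i <;> simp [ha, hb]

lemma Aff2.exists_pow_sandwich_isPosCombination {U V g : Aff2} (hg : g.lin = 1)
    {x : Fin 2 → ℝ} (hcross : cross (U.lin *ᵥ g.trans) (V.lin *ᵥ g.trans) ≠ 0)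
    (hx : IsPosCombination x (U.lin *ᵥ g.trans) (V.lin *ᵥ g.trans)) :
    ∃ s : ℕ, 0 < s ∧ IsPosCombination x (U * g ^ s * V).trans (V * g ^ s * U).trans := by
  simp only [mul_pow_mul_trans_of_lin_eq_one hg]
  obtain ⟨s, hs, hs₀⟩ :=
    ((eventually_isPosCombination_smul_add hcross hx _ _).and (eventually_gt_atTop 0)).exists
  exact ⟨s, hs₀, hs⟩

lemma diagAlphabet_pow_lin {K : ℕ} (lam : ℝ) (z : Fin K → ℤ) (a b : Fin K → ℝ) (t : Fin K)
    (n : ℕ) : (diagAlphabet lam z a b t ^ n).lin =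
      diagonal ![lam ^ (z t * n), (lam ^ (z t * n))⁻¹] := by
  rw [Aff2.pow_lin, diagAlphabet, diagonal_pow]
  congr 1
  ext i; fin_cases i <;> simp [_root_.zpow_mul]

lemma diagAlphabet_lin_eq_one {K : ℕ} (lam : ℝ) {z : Fin K → ℤ} (a b : Fin K → ℝ) {t : Fin K}
    (ht : z t = 0) : (diagAlphabet lam z a b t).lin = 1 := by
  ext i j
  fin_cases i <;> fin_cases j <;> simp [diagAlphabet, ht]

lemma exists_diagAlphabet_pow_lin_eq_diagonal {K : ℕ} {lam : ℝ} {z : Fin K → ℤ}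
    (a b : Fin K → ℝ) (hlam : 1 < lam) {i j : Fin K} (hi : 0 < z i) (hj : z j < 0)
    {P : ℝ → Prop} (hP : ∀ᶠ u in atTop, P u) :
    ∃ u : ℝ, ∃ nᵢ nⱼ : ℕ, P u ∧ (diagAlphabet lam z a b i ^ nᵢ).lin = diagonal ![u, u⁻¹] ∧
      (diagAlphabet lam z a b j ^ nⱼ).lin = diagonal ![u⁻¹, u] := by
  obtain ⟨p, hp⟩ := Int.eq_ofNat_of_zero_le hi.le
  obtain ⟨q, hq⟩ := Int.eq_ofNat_of_zero_le (neg_nonneg.2 hj.le)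
  have hu : Tendsto (fun m : ℕ => lam ^ (p * q * m)) atTop atTop := by
    simpa only [pow_mul] using tendsto_pow_atTop_atTop_of_one_lt
      (one_lt_pow₀ hlam (Nat.mul_pos (by omega) (by omega)).ne')
  obtain ⟨m, hm⟩ := (hu.eventually hP).exists
  refine ⟨_, q * m, p * m, hm, ?_, ?_⟩
  · rw [diagAlphabet_pow_lin, show z i * ↑(q * m) = ↑(p * q * m) by rw [hp]; push_cast; ring,
      zpow_natCast]
  · rw [diagAlphabet_pow_lin, show z j * ↑(p * m) = -↑(p * q * m) by
      rw [← neg_neg (z j), hq]; push_cast; ring, _root_.zpow_neg, inv_inv, zpow_natCast]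

lemma forall_mem_replicate_append_replicate_append {α ι : Type*} (f : ι → α) (t₁ t₂ t₃ : ι)
    (n₁ n₂ n₃ : ℕ) : ∀ g ∈ List.replicate n₁ (f t₁) ++ List.replicate n₂ (f t₂) ++
      List.replicate n₃ (f t₃), ∃ t, g = f t := by
  simp only [List.mem_append, List.mem_replicate]
  rintro g ((⟨-, rfl⟩ | ⟨-, rfl⟩) | ⟨-, rfl⟩) <;> exact ⟨_, rfl⟩

/-- With the diagonal alphabet setup and `λ > 1`: for `(i,j) ∈ J₊ × J₋`,
`k ∈ J₀`, and `(x,y)ᵀ ∈ Cell(e_k)` where `e_k = (a_k, b_k)ᵀ`, there are elements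
`(I,v), (I,w)` of `⟨𝒢'⟩`, each represented by a word over `𝒢'` in which the letter
indexed `k` occurs, such that `(x,y)ᵀ = r₁·v + r₂·w` for some reals `r₁, r₂ > 0`. -/
theorem cell_ek_positive_combination
    (K : ℕ) (lam : ℝ) (hlam : 1 < lam) (z : Fin K → ℤ) (a b : Fin K → ℝ)
    (i j k : Fin K) (hi : 0 < z i) (hj : z j < 0) (hk : z k = 0) (x y : ℝ)
    (hxy : ![x, y] ∈ cell ![a k, b k]) :
    ∃ lv lw : List Aff2,
      (∀ g ∈ lv, ∃ t, g = diagAlphabet lam z a b t) ∧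
      (∀ g ∈ lw, ∃ t, g = diagAlphabet lam z a b t) ∧
      diagAlphabet lam z a b k ∈ lv ∧ diagAlphabet lam z a b k ∈ lw ∧
      lv.prod.lin = 1 ∧ lw.prod.lin = 1 ∧
      ∃ r₁ r₂ : ℝ, 0 < r₁ ∧ 0 < r₂ ∧
        ![x, y] = r₁ • lv.prod.trans + r₂ • lw.prod.trans := by
  set G := diagAlphabet lam z a b
  obtain ⟨r₁, r₂, hr₁, hr₂, hxy⟩ := hxy
  change ![x, y] = ![r₁ * (G k).trans 0, r₂ * (G k).trans 1] at hxy
  have hGk : (G k).lin = 1 := diagAlphabet_lin_eq_one lam a b hk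
  by_cases hdeg : (G k).trans 0 = 0 ∨ (G k).trans 1 = 0
  · refine ⟨[G k], [G k], by simp, by simp, by simp, by simp, by simpa, by simpa, ?_⟩
    rw [List.prod_singleton, hxy]
    exact isPosCombination_self_of_eq_zero_or_eq_zero hdeg hr₁ hr₂
  rw [not_or] at hdeg
  obtain ⟨u, nᵢ, nⱼ, ⟨hu, hux⟩, hV, hU⟩ := exists_diagAlphabet_pow_lin_eq_diagonal a b hlam hi hj
    ((eventually_gt_atTop 1).and
      (eventually_isPosCombination_diagonal_mulVec hr₁ hr₂ (G k).trans))
  obtain ⟨s, hs, hsx⟩ := Aff2.exists_pow_sandwich_isPosCombination hGk (x := ![x, y])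
    (hU ▸ hV ▸ cross_diagonal_mulVec_ne_zero hu hdeg.1 hdeg.2) (hU ▸ hV ▸ hxy ▸ hux)
  have hu₀ : u ≠ 0 := by positivity
  refine ⟨List.replicate nⱼ (G j) ++ List.replicate s (G k) ++ List.replicate nᵢ (G i),
    List.replicate nᵢ (G i) ++ List.replicate s (G k) ++ List.replicate nⱼ (G j),
    forall_mem_replicate_append_replicate_append G _ _ _ _ _ _,
    forall_mem_replicate_append_replicate_append G _ _ _ _ _ _,
    by simp [hs.ne'], by simp [hs.ne'], ?_, ?_, ?_⟩
  all_goals simp only [List.prod_append, List.prod_replicate]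
  · rw [Aff2.mul_pow_mul_lin_of_lin_eq_one hGk, hU, hV]
    simpa using diagonal_mul_diagonal_inv (inv_ne_zero hu₀) hu₀
  · rw [Aff2.mul_pow_mul_lin_of_lin_eq_one hGk, hU, hV]
    simpa using diagonal_mul_diagonal_inv hu₀ (inv_ne_zero hu₀)
  · exact hsx
end
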